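/- Let G be a finite simple graph, k a real number, and D0 an orientation of G (a digraph on V(G) containing exactly one of the arcs uv, vu for each edge uv of G). Let D be the digraph obtained from D0 by adding, for each vertex u ∈ V(G), a new vertex v_u and the arc u v_u. Assign cost 1 to every arc of D; assign the matrix M1 with entries (M1)11 = k and all other entries 0 to each pendant arc u v_u, and the matrix M2 with entries (M2)22 = 2 and all other entries 0 to each arc of D0. Then for every partition P = (X1, X2) of V(D) satisfying v_u ∈ X1 ⟺ u ∈ X1 for all u ∈ V(G), letting W = V(G) ∩ X2 and e(W) denote the number of edges of G with both endpoints in W, one has w^P(D) = k·|V(G)| − k·|W| + 2·e(W); in particular w^P(D) > k·|V(G)| if and only if 2·e(W) > k·|W| with W ≠ ∅, i.e., if and only if the average degree of the induced subgraph G[W] exceeds k. -/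

import Mathlib

/-- The weight `w^P(uv)` of an arc `uv` (with cost `c uv` and assigned matrix `f uv`)
under the partition `P = (X1, V \ X1)`. -/
def arcWeight {V : Type*} [DecidableEq V] (c : V × V → ℝ)
    (f : V × V → Matrix (Fin 2) (Fin 2) ℝ) (X1 : Finset V) (a : V × V) : ℝ :=
  c a * (if a.1 ∈ X1 then (if a.2 ∈ X1 then f a 0 0 else f a 0 1)
         else (if a.2 ∈ X1 then f a 1 0 else f a 1 1))

/-- The weight `w^P(D)` of the digraph with arc set `A` under the partition
`P = (X1, V \ X1)`. -/
def partWeight {V : Type*} [DecidableEq V] (A : Finset (V × V)) (c : V × V → ℝ)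
    (f : V × V → Matrix (Fin 2) (Fin 2) ℝ) (X1 : Finset V) : ℝ :=
  ∑ a ∈ A, arcWeight c f X1 a

/-!
Every matrix of the reduction has a single nonzero entry, on the diagonal, so an arc counts
only when both its ends lie on the same side of `P`. A pendant arc `u v_u` always does, and
contributes `k` exactly when `u ∈ X1`; an arc of `D0` contributes `2` exactly when both ends
lie in `W`, and since `D0` orients every edge of `G` exactly once, these arcs are counted by
`e(W)`. Hence `w^P(D) = k (|V(G)| - |W|) + 2 e(W)`, and `e(∅) = 0` settles the nonemptiness.
-/

open Finset

theorem SimpleGraph.sum_orientation_eq_sum_edgeFinset {V M : Type*} [AddCommMonoid M]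
    (G : SimpleGraph V) [Fintype G.edgeSet] (A0 : Finset (V × V))
    (horient : ∀ u v : V, G.Adj u v ↔ ((u, v) ∈ A0 ∨ (v, u) ∈ A0))
    (hone : ∀ a ∈ A0, (a.2, a.1) ∉ A0) (g : Sym2 V → M) :
    ∑ a ∈ A0, g s(a.1, a.2) = ∑ e ∈ G.edgeFinset, g e := by
  refine sum_bij (fun a _ => s(a.1, a.2)) (fun a ha => ?_) (fun a ha b hb hab => ?_)
    (fun e he => ?_) (fun _ _ => rfl)
  · exact G.mem_edgeFinset.2 ((horient a.1 a.2).2 (Or.inl ha))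
  · rcases Sym2.eq_iff.1 hab with ⟨h1, h2⟩ | ⟨h1, h2⟩
    · exact Prod.ext h1 h2
    · have hba : (a.2, a.1) = b := Prod.ext h2 h1
      exact absurd (hba ▸ hb) (hone a ha)
  · induction e using Sym2.ind with
    | _ u v =>
      rcases (horient u v).1 (G.mem_edgeFinset.1 he) with huv | hvu
      · exact ⟨(u, v), huv, rfl⟩
      · exact ⟨(v, u), hvu, Sym2.eq_swap⟩

theorem SimpleGraph.filter_edgeFinset_forall_mem_empty {V : Type*} [Fintype V] [DecidableEq V]
    (G : SimpleGraph V) [Fintype G.edgeSet] :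
    G.edgeFinset.filter (fun e => ∀ v ∈ e, v ∈ (∅ : Finset V)) = ∅ :=
  filter_false_of_mem fun e _ h => notMem_empty _ (h _ e.out_fst_mem)

theorem arcWeight_of_eq_diagonal {V : Type*} [DecidableEq V] {c : V × V → ℝ}
    {f : V × V → Matrix (Fin 2) (Fin 2) ℝ} {X1 : Finset V} {a : V × V} {p q : ℝ}
    (hf : f a = !![p, 0; 0, q]) :
    arcWeight c f X1 a = c a * ((if a.1 ∈ X1 ∧ a.2 ∈ X1 then p else 0) +
      (if a.1 ∉ X1 ∧ a.2 ∉ X1 then q else 0)) := by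
  unfold arcWeight
  rw [hf]
  split_ifs <;> simp_all

section Reduction

variable {V : Type*} [Fintype V] [DecidableEq V]

/-- The arcs of `D`: those of `D0` on the copy `Sum.inl` of `V(G)`, and the pendant arcs
`u v_u` with `v_u = Sum.inr u`. -/
def reductionArcs (A0 : Finset (V × V)) : Finset ((V ⊕ V) × (V ⊕ V)) :=
  A0.image (fun a => ((Sum.inl a.1 : V ⊕ V), (Sum.inl a.2 : V ⊕ V))) ∪
    univ.image (fun u : V => ((Sum.inl u : V ⊕ V), Sum.inr u))

theorem partWeight_reductionArcs (A0 : Finset (V × V)) (c : (V ⊕ V) × (V ⊕ V) → ℝ)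
    (f : (V ⊕ V) × (V ⊕ V) → Matrix (Fin 2) (Fin 2) ℝ) (X1 : Finset (V ⊕ V)) :
    partWeight (reductionArcs A0) c f X1 =
      ∑ a ∈ A0, arcWeight c f X1 (Sum.inl a.1, Sum.inl a.2) +
        ∑ u : V, arcWeight c f X1 (Sum.inl u, Sum.inr u) := by
  rw [partWeight, reductionArcs, sum_union (by simp [disjoint_left]), sum_image, sum_image]
  · intro u _ v _ h
    simpa using h
  · intro a _ b _ h
    simp only [Prod.mk.injEq, Sum.inl.injEq] at h
    exact Prod.ext h.1 h.2

theorem sum_arcWeight_pendant {k : ℝ} {f : (V ⊕ V) × (V ⊕ V) → Matrix (Fin 2) (Fin 2) ℝ}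
    (hf : ∀ u : V, f (Sum.inl u, Sum.inr u) = !![k, 0; 0, 0]) (X1 : Finset (V ⊕ V))
    (hpend : ∀ u : V, Sum.inr u ∈ X1 ↔ Sum.inl u ∈ X1) :
    ∑ u : V, arcWeight (fun _ => 1) f X1 (Sum.inl u, Sum.inr u) =
      k * (Fintype.card V : ℝ) - k * (#{u | Sum.inl u ∉ X1} : ℝ) := by
  have hweight : ∀ u : V, arcWeight (fun _ => 1) f X1 (Sum.inl u, Sum.inr u) =
      if Sum.inl u ∈ X1 then k else 0 := fun u => by
    rw [arcWeight_of_eq_diagonal (hf u)]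
    by_cases hu : Sum.inl u ∈ X1 <;> simp [hpend u, hu]
  have hcard : (#{u | Sum.inl u ∈ X1} : ℝ) + #{u | Sum.inl u ∉ X1} = Fintype.card V := by
    exact_mod_cast card_filter_add_card_filter_not _
  rw [sum_congr rfl fun u _ => hweight u, ← sum_filter, sum_const, nsmul_eq_mul, ← hcard]
  ring

theorem sum_arcWeight_orientation (G : SimpleGraph V) [DecidableRel G.Adj]
    {f : (V ⊕ V) × (V ⊕ V) → Matrix (Fin 2) (Fin 2) ℝ}
    (hf : ∀ u v : V, f (Sum.inl u, Sum.inl v) = !![0, 0; 0, 2]) (A0 : Finset (V × V))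
    (horient : ∀ u v : V, G.Adj u v ↔ ((u, v) ∈ A0 ∨ (v, u) ∈ A0))
    (hone : ∀ a ∈ A0, (a.2, a.1) ∉ A0) (X1 : Finset (V ⊕ V)) :
    ∑ a ∈ A0, arcWeight (fun _ => 1) f X1 (Sum.inl a.1, Sum.inl a.2) =
      2 * (#{e ∈ G.edgeFinset | ∀ v ∈ e, v ∈ ({u | Sum.inl u ∉ X1} : Finset V)} : ℝ) := by
  set W : Finset V := {u | Sum.inl u ∉ X1}
  have hweight : ∀ a : V × V, arcWeight (fun _ => 1) f X1 (Sum.inl a.1, Sum.inl a.2) =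
      if ∀ v ∈ s(a.1, a.2), v ∈ W then 2 else 0 := fun a => by
    rw [arcWeight_of_eq_diagonal (hf a.1 a.2)]
    simp [W, Sym2.mem_iff]
  rw [sum_congr rfl fun a _ => hweight a, G.sum_orientation_eq_sum_edgeFinset A0 horient hone
      (fun e => if ∀ v ∈ e, v ∈ W then 2 else 0), ← sum_filter, sum_const, nsmul_eq_mul,
    mul_comm]

end Reduction

theorem max_average_degree_reduction {V : Type*} [Fintype V] [DecidableEq V]
    (G : SimpleGraph V) [DecidableRel G.Adj] (k : ℝ)
    (A0 : Finset (V × V))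
    (horient : ∀ u v : V, G.Adj u v ↔ ((u, v) ∈ A0 ∨ (v, u) ∈ A0))
    (hone : ∀ a ∈ A0, (a.2, a.1) ∉ A0)
    (X1 : Finset (V ⊕ V))
    (hpend : ∀ u : V, Sum.inr u ∈ X1 ↔ Sum.inl u ∈ X1) :
    let A : Finset ((V ⊕ V) × (V ⊕ V)) :=
      A0.image (fun a => ((Sum.inl a.1 : V ⊕ V), (Sum.inl a.2 : V ⊕ V))) ∪
        Finset.univ.image (fun u : V => ((Sum.inl u : V ⊕ V), Sum.inr u))
    let f : (V ⊕ V) × (V ⊕ V) → Matrix (Fin 2) (Fin 2) ℝ := fun a =>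
      match a.2 with
      | Sum.inr _ => !![k, 0; 0, 0]
      | Sum.inl _ => !![0, 0; 0, 2]
    let W : Finset V := Finset.univ.filter (fun u => Sum.inl u ∉ X1)
    let eW : ℕ := (G.edgeFinset.filter (fun e => ∀ v ∈ e, v ∈ W)).card
    partWeight A (fun _ => 1) f X1
        = k * (Fintype.card V : ℝ) - k * (W.card : ℝ) + 2 * (eW : ℝ) ∧
    (partWeight A (fun _ => 1) f X1 > k * (Fintype.card V : ℝ) ↔
      (2 * (eW : ℝ) > k * (W.card : ℝ) ∧ W.Nonempty)) ∧
    (partWeight A (fun _ => 1) f X1 > k * (Fintype.card V : ℝ) ↔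
      (W.Nonempty ∧ k < 2 * (eW : ℝ) / (W.card : ℝ))) := by
  intro A f W eW
  have hweight : partWeight A (fun _ => 1) f X1 =
      k * (Fintype.card V : ℝ) - k * (W.card : ℝ) + 2 * (eW : ℝ) := by
    rw [show A = reductionArcs A0 from rfl, partWeight_reductionArcs,
      sum_arcWeight_orientation G (fun _ _ => rfl) A0 horient hone,
      sum_arcWeight_pendant (fun _ => rfl) X1 hpend]
    ring
  have hnonempty : 2 * (eW : ℝ) > k * (W.card : ℝ) → W.Nonempty := by
    contrapose!
    intro hW
    simp only [eW, hW, G.filter_edgeFinset_forall_mem_empty, card_empty, Nat.cast_zero,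
      mul_zero, le_refl]
  have hgt : partWeight A (fun _ => 1) f X1 > k * (Fintype.card V : ℝ) ↔
      2 * (eW : ℝ) > k * (W.card : ℝ) := by
    rw [hweight]
    constructor <;> intro h <;> linarith
  have hcard_pos : W.Nonempty → (0 : ℝ) < W.card := fun hW => by exact_mod_cast hW.card_pos
  refine ⟨hweight, hgt.trans ⟨fun h => ⟨h, hnonempty h⟩, And.left⟩, hgt.trans ⟨?_, ?_⟩⟩
  · exact fun h => ⟨hnonempty h, (lt_div_iff₀ (hcard_pos (hnonempty h))).2 h⟩
  · exact fun ⟨hW, h⟩ => (lt_div_iff₀ (hcard_pos hW)).1 h
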